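/- arXiv:2501.07640 — 2 statements merged into one kernel-verified Lean document; each statement's English description precedes it below -/
import Mathlib

section
/- (Dynkin–Specht–Wever for homogeneous Lie elements.) Let T be the free associative ℂ-algebra (tensor algebra) on generators η_1,…,η_h, and let L ⊂ T be the free Lie algebra generated by the η_i under the commutator bracket. If P = ∑ X^{J_1 ⋯ J_r} η_{J_1} ⋯ η_{J_r} is a homogeneous element of degree r ≥ 1 that lies in L, then P = (1/r) ∑ X^{J_1 ⋯ J_r} [η_{J_1}, [η_{J_2}, ⋯ [η_{J_{r−1}}, η_{J_r}] ⋯ ]]. -/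
/-!
The Dynkin map `D = dynkinMap` sends a word `a₁ ⋯ aₙ` to the right-normed bracket
`[a₁, [a₂, ⋯ aₙ]]`. It satisfies `D (x y) = ρ x (D y) + ε y • D x`, where `ρ = adLift` is the
algebra map extending `ad` on the generators and `ε = algebraMapInv` is the augmentation.
On Lie elements `ρ = ad` and `ε = 0`, so `D ⁅x, y⁆ = ⁅x, D y⁆ - ⁅y, D x⁆`. The degree operator
`E = eulerOp` is a derivation, so it obeys the same rule, and `D = E` on the free Lie algebra.
For a Lie element homogeneous of degree `n` this reads `D P = n • P`.
-/

open FreeAlgebra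

attribute [local instance 100] LieRing.ofAssociativeRing

namespace LieHom

variable {R L L' : Type*} [CommRing R] [LieRing L] [LieAlgebra R L] [LieRing L'] [LieAlgebra R L']

theorem eqOn_lieSpan {f g : L →ₗ⁅R⁆ L'} {s : Set L} (h : Set.EqOn f g s) :
    Set.EqOn f g (LieSubalgebra.lieSpan R L s) := by
  intro x hx
  induction hx using LieSubalgebra.lieSpan_induction with
  | mem x hx => exact h hx
  | zero => simp
  | add x y _ _ hx hy => simp [hx, hy]
  | smul a x _ hx => simp [hx]
  | lie x y _ _ hx hy => simp [hx, hy]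

end LieHom

namespace FreeAlgebra

section CommSemiring

variable (R : Type*) [CommSemiring R] {I : Type*}

noncomputable def wordProd (l : List I) : FreeAlgebra R I := (l.map (ι R)).prod

variable {R}

@[simp]
theorem wordProd_nil : wordProd R ([] : List I) = 1 := rfl

@[simp]
theorem wordProd_cons (a : I) (l : List I) : wordProd R (a :: l) = ι R a * wordProd R l := by
  simp [wordProd]

theorem prod_ofFn_ι {n : ℕ} (J : Fin n → I) :
    (List.ofFn fun k => ι R (J k)).prod = wordProd R (List.ofFn J) := by
  rw [wordProd, List.map_ofFn]
  rfl

theorem basisFreeMonoid_apply (w : FreeMonoid I) :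
    basisFreeMonoid R I w = wordProd R w.toList := by
  simp [basisFreeMonoid, equivMonoidAlgebraFreeMonoid, wordProd, FreeMonoid.lift_apply]

theorem linearMap_ext_wordProd {M : Type*} [AddCommMonoid M] [Module R M]
    {f g : FreeAlgebra R I →ₗ[R] M} (h : ∀ l, f (wordProd R l) = g (wordProd R l)) : f = g :=
  (basisFreeMonoid R I).ext fun w => by simpa only [basisFreeMonoid_apply] using h w.toList

variable (R) in
noncomputable def eulerOp : FreeAlgebra R I →ₗ[R] FreeAlgebra R I :=
  (basisFreeMonoid R I).constr R fun w => w.toList.length • basisFreeMonoid R I w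

theorem eulerOp_wordProd (l : List I) : eulerOp R (wordProd R l) = l.length • wordProd R l := by
  have h := (basisFreeMonoid R I).constr_basis R
    (fun w => w.toList.length • basisFreeMonoid R I w) (FreeMonoid.ofList l)
  rwa [basisFreeMonoid_apply, FreeMonoid.toList_ofList] at h

theorem eulerOp_sum_ofFn [Fintype I] {n : ℕ} (X : (Fin n → I) → R) :
    eulerOp R (∑ J, X J • wordProd R (List.ofFn J)) =
      n • ∑ J, X J • wordProd R (List.ofFn J) := by
  simp only [map_sum, map_smul, eulerOp_wordProd, List.length_ofFn, Finset.smul_sum]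
  exact Finset.sum_congr rfl fun J _ => smul_comm _ _ _

theorem eulerOp_one : eulerOp R (1 : FreeAlgebra R I) = 0 := by
  simpa using eulerOp_wordProd (R := R) ([] : List I)

theorem eulerOp_ι (i : I) : eulerOp R (ι R i) = ι R i := by
  simpa using eulerOp_wordProd (R := R) [i]

theorem eulerOp_ι_mul (i : I) (y : FreeAlgebra R I) :
    eulerOp R (ι R i * y) = ι R i * y + ι R i * eulerOp R y := by
  have : eulerOp R ∘ₗ LinearMap.mulLeft R (ι R i)
      = LinearMap.mulLeft R (ι R i) + LinearMap.mulLeft R (ι R i) ∘ₗ eulerOp R := by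
    refine linearMap_ext_wordProd fun l => ?_
    simp only [LinearMap.comp_apply, LinearMap.mulLeft_apply, LinearMap.add_apply,
      ← wordProd_cons, eulerOp_wordProd, List.length_cons, succ_nsmul, mul_smul_comm]
    abel
  exact LinearMap.congr_fun this y

theorem eulerOp_mul (x y : FreeAlgebra R I) :
    eulerOp R (x * y) = eulerOp R x * y + x * eulerOp R y := by
  induction x generalizing y with
  | grade0 r => simp [Algebra.algebraMap_eq_smul_one, eulerOp_one]
  | grade1 i => rw [eulerOp_ι_mul, eulerOp_ι]
  | mul a b ha hb => simp [mul_assoc, ha, hb, add_mul, mul_add, add_assoc]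
  | add a b ha hb => simp only [add_mul, ha, hb, map_add]; abel

end CommSemiring

section CommRing

variable (R : Type*) [CommRing R] {I : Type*}

noncomputable def lieWord : List I → FreeAlgebra R I
  | [] => 0
  | [a] => ι R a
  | a :: b :: l => ⁅ι R a, lieWord (b :: l)⁆

noncomputable def dynkinMap : FreeAlgebra R I →ₗ[R] FreeAlgebra R I :=
  (basisFreeMonoid R I).constr R fun w => lieWord R w.toList

noncomputable def adLift : FreeAlgebra R I →ₐ[R] Module.End R (FreeAlgebra R I) :=
  lift R fun i => LieAlgebra.ad R _ (ι R i)

variable {R}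

@[simp]
theorem lieWord_singleton (a : I) : lieWord R [a] = ι R a := rfl

theorem lieWord_cons (a : I) {l : List I} (hl : l ≠ []) :
    lieWord R (a :: l) = ⁅ι R a, lieWord R l⁆ := by
  obtain ⟨b, l, rfl⟩ := List.exists_cons_of_ne_nil hl
  rfl

theorem lieWord_append_singleton (l : List I) (a : I) :
    lieWord R (l ++ [a]) = (l.map (ι R)).foldr (fun x acc => ⁅x, acc⁆) (ι R a) := by
  induction l with
  | nil => rfl
  | cons b l ih =>
    rw [List.cons_append, lieWord_cons b (by simp), ih, List.map_cons, List.foldr_cons]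

theorem lieWord_ofFn {r : ℕ} (J : Fin (r + 1) → I) :
    lieWord R (List.ofFn J) = (List.ofFn fun k : Fin r => ι R (J k.castSucc)).foldr
      (fun a acc => ⁅a, acc⁆) (ι R (J (Fin.last r))) := by
  rw [List.ofFn_succ', List.concat_eq_append, lieWord_append_singleton, List.map_ofFn]
  rfl

theorem dynkinMap_wordProd (l : List I) : dynkinMap R (wordProd R l) = lieWord R l := by
  have h := (basisFreeMonoid R I).constr_basis R (fun w => lieWord R w.toList)
    (FreeMonoid.ofList l)
  rwa [basisFreeMonoid_apply, FreeMonoid.toList_ofList] at h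

@[simp]
theorem algebraMapInv_ι (i : I) : algebraMapInv (ι R i) = 0 := lift_ι_apply _ _

theorem dynkinMap_one : dynkinMap R (1 : FreeAlgebra R I) = 0 :=
  dynkinMap_wordProd (R := R) ([] : List I)

theorem dynkinMap_ι (i : I) : dynkinMap R (ι R i) = ι R i := by
  simpa using dynkinMap_wordProd (R := R) [i]

theorem dynkinMap_ι_mul (i : I) (y : FreeAlgebra R I) :
    dynkinMap R (ι R i * y) = ⁅ι R i, dynkinMap R y⁆ + algebraMapInv y • ι R i := by
  have : dynkinMap R ∘ₗ LinearMap.mulLeft R (ι R i)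
      = LieAlgebra.ad R _ (ι R i) ∘ₗ dynkinMap R
        + LinearMap.toSpanSingleton R _ (ι R i) ∘ₗ
          (algebraMapInv : FreeAlgebra R I →ₐ[R] R).toLinearMap := by
    refine linearMap_ext_wordProd fun l => ?_
    rcases eq_or_ne l [] with rfl | hl
    · simp [dynkinMap_one, dynkinMap_ι]
    · obtain ⟨b, l, rfl⟩ := List.exists_cons_of_ne_nil hl
      have hε : algebraMapInv (wordProd R (b :: l)) = 0 := by simp
      simp [← wordProd_cons, dynkinMap_wordProd, lieWord_cons i hl, hε]
  exact LinearMap.congr_fun this y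

theorem dynkinMap_mul (x y : FreeAlgebra R I) :
    dynkinMap R (x * y) = adLift R x (dynkinMap R y) + algebraMapInv y • dynkinMap R x := by
  induction x generalizing y with
  | grade0 r => simp [Algebra.algebraMap_eq_smul_one, dynkinMap_one]
  | grade1 i => simp [adLift, dynkinMap_ι_mul, dynkinMap_ι]
  | mul a b ha hb =>
    simp only [mul_assoc, ha, hb, map_mul, map_add, map_smul, Module.End.mul_apply, smul_add,
      smul_smul, mul_comm]
    abel
  | add a b ha hb => simp only [add_mul, ha, hb, map_add, LinearMap.add_apply, smul_add]; abel

theorem adLift_eq_ad_of_mem_lieSpan {y : FreeAlgebra R I}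
    (hy : y ∈ LieSubalgebra.lieSpan R (FreeAlgebra R I) (Set.range (ι R))) :
    adLift R y = LieAlgebra.ad R _ y :=
  LieHom.eqOn_lieSpan (f := (adLift R).toLieHom) (g := LieAlgebra.ad R _)
    (by rintro _ ⟨i, rfl⟩; simp [adLift]) hy

theorem algebraMapInv_eq_zero_of_mem_lieSpan {y : FreeAlgebra R I}
    (hy : y ∈ LieSubalgebra.lieSpan R (FreeAlgebra R I) (Set.range (ι R))) :
    algebraMapInv y = 0 :=
  LieHom.eqOn_lieSpan (f := (algebraMapInv : FreeAlgebra R I →ₐ[R] R).toLieHom) (g := 0)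
    (by rintro _ ⟨i, rfl⟩; simp) hy

theorem dynkinMap_eq_eulerOp_of_mem_lieSpan {y : FreeAlgebra R I}
    (hy : y ∈ LieSubalgebra.lieSpan R (FreeAlgebra R I) (Set.range (ι R))) :
    dynkinMap R y = eulerOp R y := by
  induction hy using LieSubalgebra.lieSpan_induction with
  | mem x hx => obtain ⟨i, rfl⟩ := hx; rw [dynkinMap_ι, eulerOp_ι]
  | zero => simp
  | add x y _ _ hx hy => simp [hx, hy]
  | smul a x _ hx => simp [hx]
  | lie x y hxL hyL hx hy =>
    rw [Ring.lie_def, map_sub, map_sub, dynkinMap_mul, dynkinMap_mul, eulerOp_mul, eulerOp_mul,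
      algebraMapInv_eq_zero_of_mem_lieSpan hxL, algebraMapInv_eq_zero_of_mem_lieSpan hyL,
      adLift_eq_ad_of_mem_lieSpan hxL, adLift_eq_ad_of_mem_lieSpan hyL, hx, hy]
    simp only [zero_smul, add_zero, LieAlgebra.ad_apply, Ring.lie_def]
    abel

end CommRing

end FreeAlgebra

/-- Dynkin–Specht–Wever: if a homogeneous element
`P = ∑ X^{J₁ ⋯ J_{r+1}} η_{J₁} ⋯ η_{J_{r+1}}` of degree `r+1 ≥ 1` of the free
associative algebra lies in the free Lie algebra generated by the `η_i`
(the Lie subalgebra generated by the generators, with `⁅x,y⁆ = xy − yx`), then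
`P = (1/(r+1)) ∑ X^{J₁ ⋯ J_{r+1}} [η_{J₁}, [η_{J₂}, ⋯ [η_{J_r}, η_{J_{r+1}}] ⋯ ]]`. -/
theorem stmt_3 (h r : ℕ) (X : (Fin (r + 1) → Fin h) → ℂ)
    (hP : (∑ J : Fin (r + 1) → Fin h, X J • (List.ofFn fun k => ι ℂ (J k)).prod)
        ∈ LieSubalgebra.lieSpan ℂ (FreeAlgebra ℂ (Fin h)) (Set.range (ι ℂ))) :
    (∑ J : Fin (r + 1) → Fin h, X J • (List.ofFn fun k => ι ℂ (J k)).prod)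
      = ((r : ℂ) + 1)⁻¹ • ∑ J : Fin (r + 1) → Fin h,
          X J • (List.ofFn fun k : Fin r => ι ℂ (J k.castSucc)).foldr
              (fun a acc => ⁅a, acc⁆) (ι ℂ (J (Fin.last r))) := by
  simp only [prod_ofFn_ι, ← lieWord_ofFn, ← dynkinMap_wordProd] at hP ⊢
  set P := ∑ J : Fin (r + 1) → Fin h, X J • wordProd ℂ (List.ofFn J)
  have hDynkin : ∑ J : Fin (r + 1) → Fin h, X J • dynkinMap ℂ (wordProd ℂ (List.ofFn J))
      = dynkinMap ℂ P := by
    simp only [P, map_sum, map_smul]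
  rw [hDynkin, dynkinMap_eq_eulerOp_of_mem_lieSpan hP, eulerOp_sum_ofFn,
    ← Nat.cast_smul_eq_nsmul ℂ, Nat.cast_succ, inv_smul_smul₀ (Nat.cast_add_one_ne_zero r)]
end

section
/- (Ree's theorem, forward direction.) Let T̂ be the completed tensor algebra over ℂ on generators b_1,…,b_h, and let x = ∑_w c_w w be an element of the completed free Lie algebra generated by the b_i, written as a series over words w with complex coefficients c_w. Then for all nonempty words w_1 and w_2, the shuffle sum of the coefficients vanishes: ∑_{w ∈ w_1 ⧢ w_2} c_w = 0, and moreover c_∅ = 0. -/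
/-- The multiset of shuffles of two words: all interleavings of `xs` and `ys`
preserving the internal order of each, counted with multiplicity. -/
def shuffles {α : Type*} : List α → List α → Multiset (List α)
  | [], ys => {ys}
  | x :: xs, [] => {x :: xs}
  | x :: xs, y :: ys =>
      (shuffles xs (y :: ys)).map (x :: ·) + (shuffles (x :: xs) ys).map (y :: ·)
  termination_by xs ys => xs.length + ys.length
  decreasing_by all_goals simp only [List.length_cons]; omega

attribute [local instance] LieRing.ofAssociativeRing

/-!
Identify `FreeAlgebra R X` with coefficient functions on words; multiplication becomes
deconcatenation `(f ⋆ g) w = ∑_{w = w₁ w₂} f w₁ * g w₂`. Shuffling is compatible with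
deconcatenation: the shuffle sum of `f ⋆ g` over `u ⧢ v` is the sum, over all splittings
`u = u₁ u₂` and `v = v₁ v₂`, of the products of the shuffle sums of `f` over `u₁ ⧢ v₁` and
of `g` over `u₂ ⧢ v₂`. If `f` and `g` vanish at `[]` and on shuffles of nonempty words, only
the splittings `(u, []), ([], v)` and `([], u), (v, [])` survive, so the shuffle sum of
`f ⋆ g` is `f u * g v + f v * g u`. This is symmetric in `f` and `g`, hence the property
passes to commutators, and from the generators to all Lie elements. All shuffles of `u` and
`v` have length `|u| + |v|`, so only one homogeneous component of the series is involved.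
-/

open Finset

section Shuffles

variable {α : Type*}

@[simp]
theorem shuffles_nil_left (v : List α) : shuffles [] v = {v} := by rw [shuffles]

@[simp]
theorem shuffles_nil_right (u : List α) : shuffles u [] = {u} := by cases u <;> rw [shuffles]

theorem shuffles_cons_cons (x y : α) (xs ys : List α) :
    shuffles (x :: xs) (y :: ys) =
      (shuffles xs (y :: ys)).map (x :: ·) + (shuffles (x :: xs) ys).map (y :: ·) := by
  rw [shuffles]

theorem length_of_mem_shuffles : ∀ {u v w : List α}, w ∈ shuffles u v →
    w.length = u.length + v.length
  | [], v, w, hw => by simp_all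
  | x :: xs, [], w, hw => by simp_all
  | x :: xs, y :: ys, w, hw => by
    rw [shuffles_cons_cons] at hw
    obtain ⟨t, ht, rfl⟩ | ⟨t, ht, rfl⟩ :=
      (Multiset.mem_add.1 hw).imp Multiset.mem_map.1 Multiset.mem_map.1
    · simp [length_of_mem_shuffles ht]; omega
    · simp [length_of_mem_shuffles ht]; omega
  termination_by u v => u.length + v.length

variable (R : Type*) [CommSemiring R]

def shuffleSum (u v : List α) : (List α → R) →ₗ[R] R where
  toFun f := ((shuffles u v).map f).sum
  map_add' f g := Multiset.sum_map_add
  map_smul' r f := by simp [Multiset.sum_map_mul_left]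

variable {R}

theorem shuffleSum_apply (u v : List α) (f : List α → R) :
    shuffleSum R u v f = ((shuffles u v).map f).sum := rfl

@[simp]
theorem shuffleSum_nil_left (v : List α) (f : List α → R) : shuffleSum R [] v f = f v := by
  simp [shuffleSum_apply]

@[simp]
theorem shuffleSum_nil_right (u : List α) (f : List α → R) : shuffleSum R u [] f = f u := by
  simp [shuffleSum_apply]

theorem shuffleSum_cons_cons (x y : α) (xs ys : List α) (f : List α → R) :
    shuffleSum R (x :: xs) (y :: ys) f =
      shuffleSum R xs (y :: ys) (fun w => f (x :: w)) +
        shuffleSum R (x :: xs) ys (fun w => f (y :: w)) := by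
  simp [shuffleSum_apply, shuffles_cons_cons]

end Shuffles

section Deconcatenation

variable {α R : Type*} [CommSemiring R]

def deconcat (f g : List α → R) (w : List α) : R :=
  ∑ i ∈ range (w.length + 1), f (w.take i) * g (w.drop i)

theorem deconcat_nil (f g : List α → R) : deconcat f g [] = f [] * g [] := by
  simp [deconcat]

theorem deconcat_cons (f g : List α → R) (x : α) (w : List α) :
    deconcat f g (x :: w) = f [] * g (x :: w) + deconcat (fun t => f (x :: t)) g w := by
  rw [deconcat, List.length_cons, sum_range_succ', add_comm]
  simp [deconcat]

def splitShuffleSum (f g : List α → R) (u v : List α) : R :=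
  ∑ j ∈ range (u.length + 1), ∑ k ∈ range (v.length + 1),
    shuffleSum R (u.take j) (v.take k) f * shuffleSum R (u.drop j) (v.drop k) g

theorem splitShuffleSum_nil_left (f g : List α → R) (v : List α) :
    splitShuffleSum f g [] v = deconcat f g v := by
  simp [splitShuffleSum, deconcat]

theorem splitShuffleSum_nil_right (f g : List α → R) (u : List α) :
    splitShuffleSum f g u [] = deconcat f g u := by
  simp [splitShuffleSum, deconcat]

theorem splitShuffleSum_cons_cons (f g : List α → R) (x y : α) (xs ys : List α) :
    splitShuffleSum f g (x :: xs) (y :: ys) =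
      f [] * shuffleSum R (x :: xs) (y :: ys) g +
        splitShuffleSum (fun t => f (x :: t)) g xs (y :: ys) +
        splitShuffleSum (fun t => f (y :: t)) g (x :: xs) ys := by
  simp only [splitShuffleSum, List.length_cons, sum_range_succ' _ (xs.length + 1),
    sum_range_succ' _ (ys.length + 1), List.take_zero, List.drop_zero, List.take_succ_cons,
    List.drop_succ_cons, shuffleSum_nil_left, shuffleSum_nil_right, shuffleSum_cons_cons,
    add_mul, sum_add_distrib]
  abel

theorem shuffleSum_deconcat_cons_cons (f g : List α → R) (x y : α) (xs ys : List α) :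
    shuffleSum R (x :: xs) (y :: ys) (deconcat f g) =
      f [] * shuffleSum R (x :: xs) (y :: ys) g +
        shuffleSum R xs (y :: ys) (deconcat (fun t => f (x :: t)) g) +
        shuffleSum R (x :: xs) ys (deconcat (fun t => f (y :: t)) g) := by
  have hcons (z : α) : (fun w => deconcat f g (z :: w)) =
      f [] • (fun w => g (z :: w)) + deconcat (fun t => f (z :: t)) g :=
    funext fun w => deconcat_cons f g z w
  rw [shuffleSum_cons_cons, hcons, hcons, map_add, map_add, map_smul, map_smul,
    shuffleSum_cons_cons _ _ _ _ g, smul_eq_mul, smul_eq_mul]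
  ring

theorem shuffleSum_deconcat : ∀ (u v : List α) (f g : List α → R),
    shuffleSum R u v (deconcat f g) = splitShuffleSum f g u v
  | [], v, f, g => by simp [splitShuffleSum_nil_left]
  | x :: xs, [], f, g => by simp [splitShuffleSum_nil_right]
  | x :: xs, y :: ys, f, g => by
    rw [shuffleSum_deconcat_cons_cons, splitShuffleSum_cons_cons,
      shuffleSum_deconcat xs (y :: ys), shuffleSum_deconcat (x :: xs) ys]
  termination_by u v => u.length + v.length

end Deconcatenation

section Primitives

variable (α R : Type*) [CommSemiring R]

def shufflePrimitives : Submodule R (List α → R) where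
  carrier := {f | f [] = 0 ∧ ∀ u v, u ≠ [] → v ≠ [] → shuffleSum R u v f = 0}
  zero_mem' := by simp
  add_mem' {f g} hf hg := ⟨by simp [hf.1, hg.1], fun u v hu hv => by
    rw [map_add, hf.2 u v hu hv, hg.2 u v hu hv, add_zero]⟩
  smul_mem' r f hf := ⟨by simp [hf.1], fun u v hu hv => by
    rw [map_smul, hf.2 u v hu hv, smul_zero]⟩

variable {α R}

theorem shuffleSum_of_mem_shufflePrimitives {f : List α → R} (hf : f ∈ shufflePrimitives α R)
    (u v : List α) :
    shuffleSum R u v f = (if u = [] then f v else 0) + (if v = [] then f u else 0) := by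
  rcases eq_or_ne u [] with rfl | hu
  · rcases eq_or_ne v [] with rfl | hv <;> simp [*, hf.1]
  rcases eq_or_ne v [] with rfl | hv
  · simp [hu]
  · simp [hu, hv, hf.2 u v hu hv]

theorem splitShuffleSum_of_mem_shufflePrimitives {f g : List α → R}
    (hf : f ∈ shufflePrimitives α R) (hg : g ∈ shufflePrimitives α R) {u v : List α}
    (hu : u ≠ []) (hv : v ≠ []) :
    splitShuffleSum f g u v = f u * g v + f v * g u := by
  have hterm : ∀ j ∈ range (u.length + 1), ∀ k ∈ range (v.length + 1),
      shuffleSum R (u.take j) (v.take k) f * shuffleSum R (u.drop j) (v.drop k) g =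
        (if j = u.length ∧ k = 0 then f u * g v else 0) +
          (if j = 0 ∧ k = v.length then f v * g u else 0) := by
    intro j hj k hk
    have hul := List.length_pos_iff.2 hu
    have hvl := List.length_pos_iff.2 hv
    simp only [mem_range] at hj hk
    simp only [shuffleSum_of_mem_shufflePrimitives hf, shuffleSum_of_mem_shufflePrimitives hg,
      List.take_eq_nil_iff, List.drop_eq_nil_iff, hu, hv, or_false]
    split_ifs <;> first | omega | simp_all
  rw [splitShuffleSum, sum_congr rfl fun j hj => sum_congr rfl (hterm j hj)]
  simp [sum_add_distrib, ite_and, add_comm]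

theorem deconcat_sub_deconcat_mem_shufflePrimitives {R : Type*} [CommRing R] {f g : List α → R}
    (hf : f ∈ shufflePrimitives α R) (hg : g ∈ shufflePrimitives α R) :
    deconcat f g - deconcat g f ∈ shufflePrimitives α R := by
  refine ⟨by simp [deconcat_nil, hf.1], fun u v hu hv => ?_⟩
  rw [map_sub, shuffleSum_deconcat, shuffleSum_deconcat,
    splitShuffleSum_of_mem_shufflePrimitives hf hg hu hv,
    splitShuffleSum_of_mem_shufflePrimitives hg hf hu hv]
  ring

end Primitives

namespace FreeAlgebra

section CommSemiring

variable (R : Type*) {X : Type*} [CommSemiring R]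

noncomputable def wordCoeffs : FreeAlgebra R X →ₗ[R] List X → R where
  toFun p w := (equivMonoidAlgebraFreeMonoid p).coeff (FreeMonoid.ofList w)
  map_add' p q := by ext w; simp [MonoidAlgebra.coeff_add]
  map_smul' r p := by ext w; simp

variable {R}

theorem wordCoeffs_apply (p : FreeAlgebra R X) (w : List X) :
    wordCoeffs R p w = (equivMonoidAlgebraFreeMonoid p).coeff (FreeMonoid.ofList w) := rfl

theorem wordCoeffs_mul (p q : FreeAlgebra R X) :
    wordCoeffs R (p * q) = deconcat (wordCoeffs R p) (wordCoeffs R q) := by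
  classical
  ext w
  have hsplit : ∀ {m : FreeMonoid X × FreeMonoid X}, m ∈ (range (w.length + 1)).image
      (fun i => (FreeMonoid.ofList (w.take i), FreeMonoid.ofList (w.drop i))) ↔
        m.1 * m.2 = FreeMonoid.ofList w := by
    rintro ⟨a, b⟩
    simp only [mem_image, mem_range, Prod.mk.injEq]
    constructor
    · rintro ⟨i, -, rfl, rfl⟩
      exact congrArg FreeMonoid.ofList (List.take_append_drop i w)
    · intro hab
      replace hab : a.toList ++ b.toList = w := congrArg FreeMonoid.toList hab
      refine ⟨a.toList.length, by simp [← hab], ?_, ?_⟩ <;> simp [← hab]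
  rw [wordCoeffs_apply, map_mul, MonoidAlgebra.coeff_mul_antidiag _ _ _ _ hsplit, sum_image]
  · rfl
  · intro i hi j hj hij
    have := congrArg (fun m => m.1.toList.length) hij
    simp_all

theorem equivMonoidAlgebraFreeMonoid_prod_map_ι (w : List X) :
    equivMonoidAlgebraFreeMonoid ((w.map (ι R)).prod) =
      MonoidAlgebra.single (FreeMonoid.ofList w) 1 := by
  induction w with
  | nil => rw [List.map_nil, List.prod_nil, map_one, MonoidAlgebra.one_def]; rfl
  | cons x w ih =>
    have hι :
        equivMonoidAlgebraFreeMonoid (ι R x) = MonoidAlgebra.single (FreeMonoid.of x) 1 := by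
      simp [equivMonoidAlgebraFreeMonoid]
    rw [List.map_cons, List.prod_cons, map_mul, ih, hι, MonoidAlgebra.single_mul_single, one_mul,
      FreeMonoid.ofList_cons]

theorem wordCoeffs_prod_map_ι [DecidableEq X] (w v : List X) :
    wordCoeffs R ((w.map (ι R)).prod) v = if v = w then 1 else 0 := by
  classical
  rw [wordCoeffs_apply, equivMonoidAlgebraFreeMonoid_prod_map_ι, MonoidAlgebra.coeff_single,
    Finsupp.single_apply, FreeMonoid.ofList.injective.eq_iff]
  split_ifs <;> simp_all

theorem wordCoeffs_sum_ofFn [Fintype X] (c : List X → R)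
    {n : ℕ} {w : List X} (hw : w.length = n) :
    wordCoeffs R (∑ v : Fin n → X, c (List.ofFn v) • ((List.ofFn v).map (ι R)).prod) w = c w := by
  classical
  subst hw
  simp only [map_sum, map_smul, Finset.sum_apply, Pi.smul_apply, wordCoeffs_prod_map_ι,
    smul_eq_mul, mul_ite, mul_one, mul_zero]
  rw [sum_eq_single_of_mem w.get (mem_univ _) fun v _ hv => if_neg fun hwv => hv ?_]
  · simp
  · exact List.ofFn_injective (by rw [← hwv, List.ofFn_get])

theorem wordCoeffs_ι_mem_shufflePrimitives (x : X) :
    wordCoeffs R (ι R x) ∈ shufflePrimitives X R := by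
  classical
  have hι : ι R x = ([x].map (ι R)).prod := by rw [List.map_singleton, List.prod_singleton]
  refine ⟨by rw [hι, wordCoeffs_prod_map_ι, if_neg (List.cons_ne_nil x []).symm],
    fun u v hu hv => Multiset.sum_eq_zero ?_⟩
  simp only [Multiset.mem_map]
  rintro _ ⟨w, hw, rfl⟩
  have hlen := length_of_mem_shuffles hw
  have hul := List.length_pos_iff.2 hu
  have hvl := List.length_pos_iff.2 hv
  rw [hι, wordCoeffs_prod_map_ι, if_neg]
  rintro rfl
  simp only [List.length_singleton] at hlen
  omega

end CommSemiring

variable (R X : Type*) [CommRing R]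

noncomputable def shufflePrimitiveLieSubalgebra : LieSubalgebra R (FreeAlgebra R X) :=
  { (shufflePrimitives X R).comap (wordCoeffs R) with
    lie_mem' := fun {p q} hp hq => by
      change wordCoeffs R ⁅p, q⁆ ∈ shufflePrimitives X R
      rw [Ring.lie_def, map_sub, wordCoeffs_mul, wordCoeffs_mul]
      exact deconcat_sub_deconcat_mem_shufflePrimitives hp hq }

variable {R X}

theorem wordCoeffs_mem_shufflePrimitives_of_mem_lieSpan {p : FreeAlgebra R X}
    (hp : p ∈ LieSubalgebra.lieSpan R (FreeAlgebra R X) (Set.range (ι R))) :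
    wordCoeffs R p ∈ shufflePrimitives X R :=
  LieSubalgebra.lieSpan_le (K := shufflePrimitiveLieSubalgebra R X).2
    (Set.range_subset_iff.2 wordCoeffs_ι_mem_shufflePrimitives) hp

end FreeAlgebra

/-- Ree's theorem (forward direction): if the coefficient series `c` defines an element
`x = ∑_w c_w w` of the completed free Lie algebra on `b_1, …, b_h` — i.e. each homogeneous
component `∑_{|w|=n} c_w w` is a Lie element of the free associative algebra — then the
coefficients vanish on all shuffles of nonempty words, and `c_∅ = 0`. -/
theorem stmt_7 (h : ℕ) (c : List (Fin h) → ℂ)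
    (hLie : ∀ n : ℕ,
        (∑ v : Fin n → Fin h,
            c (List.ofFn v) • ((List.ofFn v).map (FreeAlgebra.ι ℂ)).prod)
          ∈ LieSubalgebra.lieSpan ℂ (FreeAlgebra ℂ (Fin h)) (Set.range (FreeAlgebra.ι ℂ))) :
    (∀ w1 w2 : List (Fin h), w1 ≠ [] → w2 ≠ [] → ((shuffles w1 w2).map c).sum = 0) ∧
    c [] = 0 := by
  have hprim n := FreeAlgebra.wordCoeffs_mem_shufflePrimitives_of_mem_lieSpan (hLie n)
  refine ⟨fun w1 w2 hw1 hw2 => ?_, ?_⟩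
  · have hc : ∀ w ∈ shuffles w1 w2, c w = FreeAlgebra.wordCoeffs ℂ _ w := fun w hw =>
      (FreeAlgebra.wordCoeffs_sum_ofFn c (length_of_mem_shuffles hw)).symm
    rw [Multiset.map_congr rfl hc]
    exact (hprim _).2 w1 w2 hw1 hw2
  · simpa only [FreeAlgebra.wordCoeffs_sum_ofFn c (n := 0) (w := []) rfl] using (hprim 0).1
end
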